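/- arXiv:2204.00708 — 8 statements merged into one kernel-verified Lean document; each statement's English description precedes it below -/
import Mathlib

section
/- Suppose s_i[0], x^k_i[0], r_i[0] ∈ [0,1] and s_i[0] + ∑_{k=1}^m x^k_i[0] + r_i[0] = 1 for all i ∈ {1,…,n} and k ∈ {1,…,m}. Then for every time t ∈ ℤ_{≥0} and every i ∈ {1,…,n}: s_i[t] ∈ [0,1], x^k_i[t] ∈ [0,1] for all k ∈ {1,…,m}, r_i[t] ∈ [0,1], and s_i[t] + ∑_{k=1}^m x^k_i[t] + r_i[t] = 1. -/
/-- Lemma 1(1) of the paper: the states of the discrete-time networked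
multi-virus SIR model remain in `[0,1]` and sum to one for all times. -/
theorem multiVirusSIR_states_well_defined
    (n m : ℕ) (hn : 0 < n) (hm : 0 < m) (h : ℝ) (hh : 0 < h)
    (β : Fin m → Fin n → Fin n → ℝ) (γ : Fin m → Fin n → ℝ)
    (hβ : ∀ k i j, 0 ≤ β k i j) (hγ : ∀ k i, 0 < γ k i)
    (hβsum : ∀ i, h * (∑ k, ∑ j, β k i j) ≤ 1)
    (hγsum : ∀ i, h * (∑ k, γ k i) ≤ 1)
    (s : ℕ → Fin n → ℝ) (x : ℕ → Fin m → Fin n → ℝ) (r : ℕ → Fin n → ℝ)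
    (hs : ∀ t i, s (t + 1) i = s t i - h * (s t i * ∑ k, ∑ j, β k i j * x t k j))
    (hx : ∀ t k i, x (t + 1) k i
      = x t k i + h * (s t i * (∑ j, β k i j * x t k j) - γ k i * x t k i))
    (hr : ∀ t i, r (t + 1) i = r t i + h * ∑ k, γ k i * x t k i)
    (hinit : ∀ i, s 0 i ∈ Set.Icc (0 : ℝ) 1 ∧ (∀ k, x 0 k i ∈ Set.Icc (0 : ℝ) 1) ∧
      r 0 i ∈ Set.Icc (0 : ℝ) 1 ∧ s 0 i + (∑ k, x 0 k i) + r 0 i = 1) :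
    ∀ t : ℕ, ∀ i, s t i ∈ Set.Icc (0 : ℝ) 1 ∧ (∀ k, x t k i ∈ Set.Icc (0 : ℝ) 1) ∧
      r t i ∈ Set.Icc (0 : ℝ) 1 ∧ s t i + (∑ k, x t k i) + r t i = 1 := by
  -- Key invariant: nonnegativity plus sum-to-one.
  have key : ∀ t : ℕ, ∀ i, 0 ≤ s t i ∧ (∀ k, 0 ≤ x t k i) ∧ 0 ≤ r t i ∧
      s t i + (∑ k, x t k i) + r t i = 1 := by
    intro t
    induction t with
    | zero =>
      intro i
      obtain ⟨hs0, hx0, hr0, hsum⟩ := hinit i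
      exact ⟨hs0.1, fun k => (hx0 k).1, hr0.1, hsum⟩
    | succ t ih =>
      intro i
      obtain ⟨hs0, hx0, hr0, hsum⟩ := ih i
      -- each infection level is at most one
      have hxle : ∀ k j, x t k j ≤ 1 := by
        intro k j
        obtain ⟨hs0', hx0', hr0', hsum'⟩ := ih j
        have h1 : x t k j ≤ ∑ k', x t k' j :=
          Finset.single_le_sum (fun k' _ => hx0' k') (Finset.mem_univ k)
        linarith
      -- the infection pressure is nonnegative
      have hpress_nonneg : ∀ k, 0 ≤ ∑ j, β k i j * x t k j := fun k =>
        Finset.sum_nonneg fun j _ => mul_nonneg (hβ k i j) ((ih j).2.1 k)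
      -- and bounded: h * total pressure ≤ 1
      have hpress_le : h * (∑ k, ∑ j, β k i j * x t k j) ≤ 1 := by
        refine le_trans ?_ (hβsum i)
        refine mul_le_mul_of_nonneg_left ?_ hh.le
        refine Finset.sum_le_sum fun k _ => Finset.sum_le_sum fun j _ => ?_
        exact mul_le_of_le_one_right (hβ k i j) (hxle k j)
      -- h * γ k i ≤ 1
      have hγle : ∀ k, h * γ k i ≤ 1 := by
        intro k
        refine le_trans ?_ (hγsum i)
        refine mul_le_mul_of_nonneg_left ?_ hh.le
        exact Finset.single_le_sum (fun k' _ => (hγ k' i).le) (Finset.mem_univ k)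
      refine ⟨?_, ?_, ?_, ?_⟩
      · rw [hs]
        have h2 : (0:ℝ) ≤ s t i * (1 - h * ∑ k, ∑ j, β k i j * x t k j) :=
          mul_nonneg hs0 (by linarith)
        nlinarith [h2]
      · intro k
        rw [hx]
        have h1 : 0 ≤ s t i * ∑ j, β k i j * x t k j :=
          mul_nonneg hs0 (hpress_nonneg k)
        nlinarith [hx0 k, hγle k, (hγ k i).le]
      · rw [hr]
        have : 0 ≤ ∑ k, γ k i * x t k i :=
          Finset.sum_nonneg fun k _ => mul_nonneg (hγ k i).le (hx0 k)
        nlinarith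
      · rw [hs, hr]
        have e0 : ∑ k, s t i * ∑ j, β k i j * x t k j
            = s t i * ∑ k, ∑ j, β k i j * x t k j := (Finset.mul_sum _ _ _).symm
        have e1 : ∑ k, x (t + 1) k i
            = (∑ k, x t k i) + (h * (s t i * ∑ k, ∑ j, β k i j * x t k j)
              - h * ∑ k, γ k i * x t k i) := by
          simp only [hx]
          rw [Finset.sum_add_distrib, ← Finset.mul_sum, Finset.sum_sub_distrib, e0]
          ring
        rw [e1]
        linarith [hsum]
  intro t i
  obtain ⟨hs0, hx0, hr0, hsum⟩ := key t i
  have hxsum_nonneg : 0 ≤ ∑ k, x t k i := Finset.sum_nonneg fun k _ => hx0 k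
  refine ⟨⟨hs0, by linarith⟩, fun k => ⟨hx0 k, ?_⟩, ⟨hr0, by linarith⟩, hsum⟩
  have h1 : x t k i ≤ ∑ k', x t k' i :=
    Finset.single_le_sum (fun k' _ => hx0 k') (Finset.mem_univ k)
  linarith
end

section
/- Suppose s_i[0], x^k_i[0], r_i[0] ∈ [0,1] and s_i[0] + ∑_{k=1}^m x^k_i[0] + r_i[0] = 1 for all i ∈ {1,…,n} and k ∈ {1,…,m}. Then the susceptible proportions are monotonically nonincreasing: s_i[t+1] ≤ s_i[t] for all i ∈ {1,…,n} and all t ∈ ℤ_{≥0}. -/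
/-- Lemma 1(2) of the paper: in the discrete-time networked multi-virus SIR
model the susceptible proportions are monotonically nonincreasing. -/
theorem multiVirusSIR_susceptible_nonincreasing
    (n m : ℕ) (hn : 0 < n) (hm : 0 < m) (h : ℝ) (hh : 0 < h)
    (β : Fin m → Fin n → Fin n → ℝ) (γ : Fin m → Fin n → ℝ)
    (hβ : ∀ k i j, 0 ≤ β k i j) (hγ : ∀ k i, 0 < γ k i)
    (hβsum : ∀ i, h * (∑ k, ∑ j, β k i j) ≤ 1)
    (hγsum : ∀ i, h * (∑ k, γ k i) ≤ 1)
    (s : ℕ → Fin n → ℝ) (x : ℕ → Fin m → Fin n → ℝ) (r : ℕ → Fin n → ℝ)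
    (hs : ∀ t i, s (t + 1) i = s t i - h * (s t i * ∑ k, ∑ j, β k i j * x t k j))
    (hx : ∀ t k i, x (t + 1) k i
      = x t k i + h * (s t i * (∑ j, β k i j * x t k j) - γ k i * x t k i))
    (hr : ∀ t i, r (t + 1) i = r t i + h * ∑ k, γ k i * x t k i)
    (hinit : ∀ i, s 0 i ∈ Set.Icc (0 : ℝ) 1 ∧ (∀ k, x 0 k i ∈ Set.Icc (0 : ℝ) 1) ∧
      r 0 i ∈ Set.Icc (0 : ℝ) 1 ∧ s 0 i + (∑ k, x 0 k i) + r 0 i = 1) :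
    ∀ i, ∀ t : ℕ, s (t + 1) i ≤ s t i := by
  -- key invariant
  have key : ∀ t : ℕ, (∀ i, 0 ≤ s t i) ∧ (∀ k i, 0 ≤ x t k i) ∧ (∀ i, 0 ≤ r t i) ∧
      (∀ i, s t i + (∑ k, x t k i) + r t i = 1) := by
    intro t
    induction t with
    | zero =>
      refine ⟨fun i => (hinit i).1.1, fun k i => ((hinit i).2.1 k).1,
        fun i => (hinit i).2.2.1.1, fun i => (hinit i).2.2.2⟩
    | succ t ih =>
      obtain ⟨hsn, hxn, hrn, hsum⟩ := ih
      -- x t k i ≤ 1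
      have hx1 : ∀ k i, x t k i ≤ 1 := by
        intro k i
        have h1 : x t k i ≤ ∑ k', x t k' i :=
          Finset.single_le_sum (f := fun k' => x t k' i) (fun k' _ => hxn k' i)
            (Finset.mem_univ k)
        have h2 : ∑ k', x t k' i ≤ 1 := by
          have := hsum i
          nlinarith [hsn i, hrn i]
        linarith
      have hsn' : ∀ i, 0 ≤ s (t + 1) i := by
        intro i
        rw [hs]
        have hb : ∑ k, ∑ j, β k i j * x t k j ≤ ∑ k, ∑ j, β k i j := by
          apply Finset.sum_le_sum; intro k _
          apply Finset.sum_le_sum; intro j _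
          nlinarith [hβ k i j, hx1 k j, hxn k j]
        have hb0 : 0 ≤ ∑ k, ∑ j, β k i j * x t k j :=
          Finset.sum_nonneg fun k _ => Finset.sum_nonneg fun j _ =>
            mul_nonneg (hβ k i j) (hxn k j)
        have hle : h * ∑ k, ∑ j, β k i j * x t k j ≤ 1 := by
          calc h * ∑ k, ∑ j, β k i j * x t k j ≤ h * ∑ k, ∑ j, β k i j := by
                exact mul_le_mul_of_nonneg_left hb hh.le
            _ ≤ 1 := hβsum i
        nlinarith [mul_nonneg (hsn i) (sub_nonneg.2 hle)]
      have hxn' : ∀ k i, 0 ≤ x (t + 1) k i := by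
        intro k i
        rw [hx]
        have hg : h * γ k i ≤ 1 := by
          have h1 : γ k i ≤ ∑ k', γ k' i :=
            Finset.single_le_sum (f := fun k' => γ k' i) (fun k' _ => (hγ k' i).le)
              (Finset.mem_univ k)
          calc h * γ k i ≤ h * ∑ k', γ k' i := mul_le_mul_of_nonneg_left h1 hh.le
            _ ≤ 1 := hγsum i
        have hb0 : 0 ≤ ∑ j, β k i j * x t k j :=
          Finset.sum_nonneg fun j _ => mul_nonneg (hβ k i j) (hxn k j)
        nlinarith [mul_nonneg hh.le (mul_nonneg (hsn i) hb0),
          mul_nonneg (hxn k i) (sub_nonneg.2 hg)]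
      refine ⟨hsn', hxn', ?_, ?_⟩
      · intro i
        rw [hr]
        have : 0 ≤ ∑ k, γ k i * x t k i :=
          Finset.sum_nonneg fun k _ => mul_nonneg (hγ k i).le (hxn k i)
        nlinarith [hrn i]
      · intro i
        have hsum' : ∑ k, x (t + 1) k i
            = (∑ k, x t k i) + h * (s t i * (∑ k, ∑ j, β k i j * x t k j)
              - ∑ k, γ k i * x t k i) := by
          rw [Finset.sum_congr rfl (fun k _ => hx t k i)]
          rw [Finset.sum_add_distrib, ← Finset.mul_sum, Finset.sum_sub_distrib,
            ← Finset.mul_sum]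
        rw [hs, hr, hsum']
        have := hsum i
        ring_nf
        ring_nf at this
        linarith
  intro i t
  obtain ⟨hsn, hxn, _, _⟩ := key t
  rw [hs]
  have hb0 : 0 ≤ ∑ k, ∑ j, β k i j * x t k j :=
    Finset.sum_nonneg fun k _ => Finset.sum_nonneg fun j _ =>
      mul_nonneg (hβ k i j) (hxn k j)
  nlinarith [mul_nonneg hh.le (mul_nonneg (hsn i) hb0)]
end

section
/- Suppose s_i[0], x^k_i[0], r_i[0] ∈ [0,1] and s_i[0] + ∑_{k=1}^m x^k_i[0] + r_i[0] = 1 for all i, k. Fix a virus index k ∈ {1,…,m} and let M^k = I − hΓ^k + hB^k. If the spectral radius satisfies ρ(M^k) < 1, then the infection state of virus k converges to zero exponentially: there exist constants α > 0 and ω with 0 ≤ ω < 1 such that ‖x^k[t]‖ ≤ α · ‖x^k[0]‖ · ω^t for all t ∈ ℤ_{≥0}, where ‖·‖ is the Euclidean norm. -/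
/-!
Along any trajectory the state of every node stays in the probability simplex, so
`0 ≤ s_i[t] ≤ 1` and `x^k[t] ≥ 0`. Hence `x^k[t+1] = (I + h(S[t]B^k − Γ^k)) x^k[t] ≤ M^k x^k[t]`
entrywise, and since `M^k` is entrywise nonnegative, `0 ≤ x^k[t] ≤ (M^k)^t x^k[0]`.
Choosing `ρ(M^k) < ω < 1`, Gelfand's formula gives `‖(M^k)^t‖ ≤ C ω^t`.
-/

open Filter Matrix WithLp
open scoped NNReal ENNReal

theorem exists_norm_pow_le_of_spectralRadius_lt {A : Type*} [NormedRing A] [NormedAlgebra ℂ A]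
    [CompleteSpace A] {a : A} {ω : ℝ≥0} (ha : spectralRadius ℂ a < ω) :
    ∃ C > 0, ∀ t : ℕ, ‖a ^ t‖ ≤ C * ω ^ t := by
  have hω : 0 < ω := by exact_mod_cast zero_le.trans_lt ha
  have hbigO : (fun t : ℕ => a ^ t) =O[atTop] fun t => (ω : ℝ) ^ t := by
    refine Asymptotics.IsBigO.of_bound 1 ?_
    filter_upwards [(spectrum.pow_nnnorm_pow_one_div_tendsto_nhds_spectralRadius a).eventually_lt_const
      ha, eventually_ge_atTop 1] with t ht ht1
    have ht0 : (0 : ℝ) < t := by exact_mod_cast ht1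
    have hpow := ENNReal.rpow_lt_rpow ht ht0
    rw [← ENNReal.rpow_mul, one_div_mul_cancel ht0.ne', ENNReal.rpow_one,
      ENNReal.rpow_natCast] at hpow
    rw [one_mul, Real.norm_of_nonneg (by positivity)]
    exact_mod_cast hpow.le
  obtain ⟨C, hC, hbound⟩ := Asymptotics.bound_of_isBigO_nat_atTop hbigO
  refine ⟨C, hC, fun t => ?_⟩
  simpa using hbound (pow_ne_zero t (NNReal.coe_ne_zero.mpr hω.ne'))

theorem Matrix.mulVec_mono_of_nonneg {m n R : Type*} [Fintype n] [Semiring R] [PartialOrder R]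
    [IsOrderedRing R] {A : Matrix m n R} (hA : ∀ i j, 0 ≤ A i j) {v w : n → R} (hvw : v ≤ w) :
    A *ᵥ v ≤ A *ᵥ w := fun i =>
  Finset.sum_le_sum fun j _ => mul_le_mul_of_nonneg_left (hvw j) (hA i j)

theorem Matrix.le_pow_mulVec_of_le_mulVec {n R : Type*} [Fintype n] [DecidableEq n] [Semiring R]
    [PartialOrder R] [IsOrderedRing R] {A : Matrix n n R} (hA : ∀ i j, 0 ≤ A i j)
    {y : ℕ → n → R} (hy : ∀ t, y (t + 1) ≤ A *ᵥ y t) (t : ℕ) : y t ≤ (A ^ t) *ᵥ y 0 := by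
  induction t with
  | zero => simp
  | succ t ih =>
    calc y (t + 1) ≤ A *ᵥ y t := hy t
      _ ≤ A *ᵥ ((A ^ t) *ᵥ y 0) := mulVec_mono_of_nonneg hA ih
      _ = (A ^ (t + 1)) *ᵥ y 0 := by rw [mulVec_mulVec, pow_succ']

theorem EuclideanSpace.norm_toLp_eq_sqrt {ι : Type*} [Fintype ι] (v : ι → ℝ) :
    ‖toLp 2 v‖ = √(∑ i, v i ^ 2) := by
  simp [EuclideanSpace.norm_eq]

theorem EuclideanSpace.norm_toLp_le_of_nonneg_of_le {ι : Type*} [Fintype ι] {v w : ι → ℝ}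
    (hv : 0 ≤ v) (hvw : v ≤ w) : ‖toLp 2 v‖ ≤ ‖toLp 2 w‖ := by
  simp only [norm_toLp_eq_sqrt]
  gcongr with i
  · exact hv i
  · exact hvw i

section Frobenius

/- The Frobenius norm is submultiplicative, dominates the Euclidean operator norm, and is
unchanged by the embedding of real matrices into complex ones. -/
open scoped Matrix.Norms.Frobenius

variable {ι : Type*} [Fintype ι]

theorem Matrix.frobenius_norm_mulVec_le {m 𝕜 : Type*} [Fintype m] [RCLike 𝕜]
    (A : Matrix m ι 𝕜) (v : ι → 𝕜) : ‖toLp 2 (A *ᵥ v)‖ ≤ ‖A‖ * ‖toLp 2 v‖ := by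
  simpa only [← frobenius_norm_replicateCol (ι := Unit), replicateCol_mulVec]
    using frobenius_norm_mul A (replicateCol Unit v)

theorem Matrix.exists_norm_pow_mulVec_le_of_spectralRadius_lt [DecidableEq ι]
    (M : Matrix ι ι ℝ) {ω : ℝ≥0} (hM : spectralRadius ℂ (M.map (algebraMap ℝ ℂ)) < ω) :
    ∃ C > 0, ∀ (t : ℕ) (v : ι → ℝ), ‖toLp 2 ((M ^ t) *ᵥ v)‖ ≤ C * ‖toLp 2 v‖ * ω ^ t := by
  have : CompleteSpace (Matrix ι ι ℂ) := FiniteDimensional.complete ℂ _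
  obtain ⟨C, hC, hpow⟩ := exists_norm_pow_le_of_spectralRadius_lt hM
  refine ⟨C, hC, fun t v => ?_⟩
  have hnorm : ‖M ^ t‖ ≤ C * ω ^ t := by
    rw [← frobenius_norm_map_eq (M ^ t) (algebraMap ℝ ℂ) Complex.norm_real,
      Matrix.map_pow M (algebraMap ℝ ℂ)]
    exact hpow t
  calc ‖toLp 2 ((M ^ t) *ᵥ v)‖ ≤ ‖M ^ t‖ * ‖toLp 2 v‖ := frobenius_norm_mulVec_le _ _
    _ ≤ C * ω ^ t * ‖toLp 2 v‖ := by gcongr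
    _ = C * ‖toLp 2 v‖ * ω ^ t := by ring

end Frobenius

section SIRState

variable {ι κ : Type*} [Fintype κ]

structure IsSIRState (s : ι → ℝ) (x : κ → ι → ℝ) (r : ι → ℝ) : Prop where
  s_nonneg : ∀ i, 0 ≤ s i
  x_nonneg : ∀ k i, 0 ≤ x k i
  r_nonneg : ∀ i, 0 ≤ r i
  sum_eq_one : ∀ i, s i + ∑ k, x k i + r i = 1

namespace IsSIRState

variable {s : ι → ℝ} {x : κ → ι → ℝ} {r : ι → ℝ}

theorem x_le_one (hS : IsSIRState s x r) (k : κ) (i : ι) : x k i ≤ 1 := by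
  have := Finset.single_le_sum (fun k' _ => hS.x_nonneg k' i) (Finset.mem_univ k)
  linarith [hS.s_nonneg i, hS.r_nonneg i, hS.sum_eq_one i]

theorem s_le_one (hS : IsSIRState s x r) (i : ι) : s i ≤ 1 := by
  have := Finset.sum_nonneg fun k (_ : k ∈ Finset.univ) => hS.x_nonneg k i
  linarith [hS.r_nonneg i, hS.sum_eq_one i]

variable [Fintype ι] {h : ℝ} {β : κ → ι → ι → ℝ} {γ : κ → ι → ℝ}

theorem step (hh : 0 ≤ h) (hβ : ∀ k i j, 0 ≤ β k i j) (hγ : ∀ k i, 0 ≤ γ k i)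
    (hβsum : ∀ i, h * ∑ k, ∑ j, β k i j ≤ 1) (hγ1 : ∀ k i, h * γ k i ≤ 1)
    (hS : IsSIRState s x r) {s' : ι → ℝ} {x' : κ → ι → ℝ} {r' : ι → ℝ}
    (hs : ∀ i, s' i = s i - h * (s i * ∑ k, ∑ j, β k i j * x k j))
    (hx : ∀ k i, x' k i = x k i + h * (s i * (∑ j, β k i j * x k j) - γ k i * x k i))
    (hr : ∀ i, r' i = r i + h * ∑ k, γ k i * x k i) :
    IsSIRState s' x' r' := by
  have hforce_nonneg : ∀ k i, 0 ≤ ∑ j, β k i j * x k j := fun k i =>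
    Finset.sum_nonneg fun j _ => mul_nonneg (hβ k i j) (hS.x_nonneg k j)
  have hforce_le : ∀ i, h * ∑ k, ∑ j, β k i j * x k j ≤ 1 := fun i =>
    calc h * ∑ k, ∑ j, β k i j * x k j ≤ h * ∑ k, ∑ j, β k i j := by
          gcongr with k _ j _
          exact mul_le_of_le_one_right (hβ k i j) (hS.x_le_one k j)
      _ ≤ 1 := hβsum i
  refine ⟨fun i => ?_, fun k i => ?_, fun i => ?_, fun i => ?_⟩
  · rw [hs]
    nlinarith [mul_nonneg (hS.s_nonneg i) (sub_nonneg.mpr (hforce_le i))]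
  · rw [hx]
    nlinarith [mul_nonneg (hS.x_nonneg k i) (sub_nonneg.mpr (hγ1 k i)),
      mul_nonneg (mul_nonneg hh (hS.s_nonneg i)) (hforce_nonneg k i)]
  · rw [hr]
    have := Finset.sum_nonneg fun k (_ : k ∈ Finset.univ) =>
      mul_nonneg (hγ k i) (hS.x_nonneg k i)
    nlinarith [mul_nonneg hh this, hS.r_nonneg i]
  · simp only [hs, hx, hr, Finset.sum_add_distrib, ← Finset.mul_sum, Finset.sum_sub_distrib]
    linarith [hS.sum_eq_one i]

end IsSIRState

theorem isSIRState_of_recurrence [Fintype ι] {h : ℝ} {β : κ → ι → ι → ℝ} {γ : κ → ι → ℝ}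
    (hh : 0 ≤ h) (hβ : ∀ k i j, 0 ≤ β k i j) (hγ : ∀ k i, 0 ≤ γ k i)
    (hβsum : ∀ i, h * ∑ k, ∑ j, β k i j ≤ 1) (hγ1 : ∀ k i, h * γ k i ≤ 1)
    {s : ℕ → ι → ℝ} {x : ℕ → κ → ι → ℝ} {r : ℕ → ι → ℝ}
    (hs : ∀ t i, s (t + 1) i = s t i - h * (s t i * ∑ k, ∑ j, β k i j * x t k j))
    (hx : ∀ t k i, x (t + 1) k i
      = x t k i + h * (s t i * (∑ j, β k i j * x t k j) - γ k i * x t k i))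
    (hr : ∀ t i, r (t + 1) i = r t i + h * ∑ k, γ k i * x t k i)
    (h0 : IsSIRState (s 0) (x 0) (r 0)) (t : ℕ) : IsSIRState (s t) (x t) (r t) := by
  induction t with
  | zero => exact h0
  | succ t ih => exact ih.step hh hβ hγ hβsum hγ1 (hs t) (hx t) (hr t)

end SIRState

section SIRMatrix

variable {ι : Type*} [DecidableEq ι]

def sirMatrix (h : ℝ) (γ : ι → ℝ) (β : ι → ι → ℝ) : Matrix ι ι ℝ :=
  1 - h • diagonal γ + h • of β

variable {h : ℝ} {γ : ι → ℝ} {β : ι → ι → ℝ}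

theorem sirMatrix_apply_nonneg (hh : 0 ≤ h) (hγ : ∀ i, h * γ i ≤ 1) (hβ : ∀ i j, 0 ≤ β i j)
    (i j : ι) : 0 ≤ sirMatrix h γ β i j := by
  have := mul_nonneg hh (hβ i j)
  by_cases hij : i = j
  · subst hij
    simp only [sirMatrix, Matrix.add_apply, Matrix.sub_apply, one_apply_eq, Matrix.smul_apply,
      diagonal_apply_eq, of_apply, smul_eq_mul]
    linarith [hγ i]
  · simpa [sirMatrix, hij] using this

variable [Fintype ι]

theorem sirMatrix_mulVec (v : ι → ℝ) :
    sirMatrix h γ β *ᵥ v = fun i => v i + h * (∑ j, β i j * v j - γ i * v i) := by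
  ext i
  rw [sirMatrix, add_mulVec, sub_mulVec, one_mulVec, smul_mulVec, smul_mulVec]
  simp only [Pi.add_apply, Pi.sub_apply, Pi.smul_apply, smul_eq_mul, mulVec_diagonal]
  simp only [mulVec, dotProduct, of_apply]
  ring

theorem le_sirMatrix_mulVec (hh : 0 ≤ h) (hβ : ∀ i j, 0 ≤ β i j) {s v : ι → ℝ}
    (hs : ∀ i, s i ≤ 1) (hv : ∀ i, 0 ≤ v i) :
    (fun i => v i + h * (s i * (∑ j, β i j * v j) - γ i * v i)) ≤ sirMatrix h γ β *ᵥ v := by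
  intro i
  have hforce : 0 ≤ ∑ j, β i j * v j := Finset.sum_nonneg fun j _ => mul_nonneg (hβ i j) (hv j)
  rw [sirMatrix_mulVec]
  nlinarith [mul_nonneg (mul_nonneg hh hforce) (sub_nonneg.mpr (hs i))]

end SIRMatrix

theorem multiVirusSIR_exponential_eradication_general
    (n m : ℕ) (h : ℝ) (hh : 0 < h)
    (β : Fin m → Fin n → Fin n → ℝ) (γ : Fin m → Fin n → ℝ)
    (hβ : ∀ k i j, 0 ≤ β k i j) (hγ : ∀ k i, 0 < γ k i)
    (hβsum : ∀ i, h * (∑ k, ∑ j, β k i j) ≤ 1)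
    (hγsum : ∀ i, h * (∑ k, γ k i) ≤ 1)
    (s : ℕ → Fin n → ℝ) (x : ℕ → Fin m → Fin n → ℝ) (r : ℕ → Fin n → ℝ)
    (hs : ∀ t i, s (t + 1) i = s t i - h * (s t i * ∑ k, ∑ j, β k i j * x t k j))
    (hx : ∀ t k i, x (t + 1) k i
      = x t k i + h * (s t i * (∑ j, β k i j * x t k j) - γ k i * x t k i))
    (hr : ∀ t i, r (t + 1) i = r t i + h * ∑ k, γ k i * x t k i)
    (hinit : ∀ i, s 0 i ∈ Set.Icc (0 : ℝ) 1 ∧ (∀ k, x 0 k i ∈ Set.Icc (0 : ℝ) 1) ∧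
      r 0 i ∈ Set.Icc (0 : ℝ) 1 ∧ s 0 i + (∑ k, x 0 k i) + r 0 i = 1)
    (k : Fin m)
    (M : Matrix (Fin n) (Fin n) ℝ)
    (hM : M = 1 - h • Matrix.diagonal (γ k) + h • Matrix.of (β k))
    (hρ : spectralRadius ℂ (M.map (algebraMap ℝ ℂ)) < 1) :
    ∃ α ω : ℝ, 0 < α ∧ 0 ≤ ω ∧ ω < 1 ∧
      ∀ t : ℕ, Real.sqrt (∑ i, (x t k i) ^ 2)
        ≤ α * Real.sqrt (∑ i, (x 0 k i) ^ 2) * ω ^ t := by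
  have hγ1 : ∀ k i, h * γ k i ≤ 1 := fun k i =>
    (mul_le_mul_of_nonneg_left (Finset.single_le_sum (fun k' _ => (hγ k' i).le)
      (Finset.mem_univ k)) hh.le).trans (hγsum i)
  have hstate := isSIRState_of_recurrence hh.le hβ (fun k i => (hγ k i).le) hβsum hγ1 hs hx hr
    ⟨fun i => (hinit i).1.1, fun k i => ((hinit i).2.1 k).1, fun i => (hinit i).2.2.1.1,
      fun i => (hinit i).2.2.2⟩
  have hcomp : ∀ t, x t k ≤ (M ^ t) *ᵥ x 0 k := by
    subst hM
    exact le_pow_mulVec_of_le_mulVec (sirMatrix_apply_nonneg hh.le (hγ1 k) (hβ k)) fun t i =>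
      (hx t k i).trans_le
        (le_sirMatrix_mulVec hh.le (hβ k) (hstate t).s_le_one ((hstate t).x_nonneg k) i)
  obtain ⟨ω, hρω, hω1⟩ := ENNReal.lt_iff_exists_nnreal_btwn.mp hρ
  obtain ⟨C, hC, hdecay⟩ := M.exists_norm_pow_mulVec_le_of_spectralRadius_lt hρω
  refine ⟨C, ω, hC, ω.2, by exact_mod_cast hω1, fun t => ?_⟩
  simp only [← EuclideanSpace.norm_toLp_eq_sqrt]
  exact (EuclideanSpace.norm_toLp_le_of_nonneg_of_le ((hstate t).x_nonneg k) (hcomp t)).trans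
    (hdecay t _)

/-- Theorem 1 of the paper: if `ρ(M^k) < 1` where `M^k = I - hΓ^k + hB^k`, then the
infection level of virus `k` converges to zero in exponential time
(the spectral radius is taken over `ℂ`). -/
theorem multiVirusSIR_exponential_eradication
    (n m : ℕ) (hn : 0 < n) (hm : 0 < m) (h : ℝ) (hh : 0 < h)
    (β : Fin m → Fin n → Fin n → ℝ) (γ : Fin m → Fin n → ℝ)
    (hβ : ∀ k i j, 0 ≤ β k i j) (hγ : ∀ k i, 0 < γ k i)
    (hβsum : ∀ i, h * (∑ k, ∑ j, β k i j) ≤ 1)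
    (hγsum : ∀ i, h * (∑ k, γ k i) ≤ 1)
    (s : ℕ → Fin n → ℝ) (x : ℕ → Fin m → Fin n → ℝ) (r : ℕ → Fin n → ℝ)
    (hs : ∀ t i, s (t + 1) i = s t i - h * (s t i * ∑ k, ∑ j, β k i j * x t k j))
    (hx : ∀ t k i, x (t + 1) k i
      = x t k i + h * (s t i * (∑ j, β k i j * x t k j) - γ k i * x t k i))
    (hr : ∀ t i, r (t + 1) i = r t i + h * ∑ k, γ k i * x t k i)
    (hinit : ∀ i, s 0 i ∈ Set.Icc (0 : ℝ) 1 ∧ (∀ k, x 0 k i ∈ Set.Icc (0 : ℝ) 1) ∧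
      r 0 i ∈ Set.Icc (0 : ℝ) 1 ∧ s 0 i + (∑ k, x 0 k i) + r 0 i = 1)
    (k : Fin m)
    (M : Matrix (Fin n) (Fin n) ℝ)
    (hM : M = 1 - h • Matrix.diagonal (γ k) + h • Matrix.of (β k))
    (hρ : spectralRadius ℂ (M.map (algebraMap ℝ ℂ)) < 1) :
    ∃ α ω : ℝ, 0 < α ∧ 0 ≤ ω ∧ ω < 1 ∧
      ∀ t : ℕ, Real.sqrt (∑ i, (x t k i) ^ 2)
        ≤ α * Real.sqrt (∑ i, (x 0 k i) ^ 2) * ω ^ t :=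
  multiVirusSIR_exponential_eradication_general n m h hh β γ hβ hγ hβsum hγsum s x r hs hx hr hinit
    k M hM hρ
end

section
/- Suppose s_i[0], x^k_i[0], r_i[0] ∈ [0,1] and s_i[0] + ∑_{k=1}^m x^k_i[0] + r_i[0] = 1 for all i, k. Fix a virus index k ∈ {1,…,m}, let M^k = I − hΓ^k + hB^k, and let P^k be a diagonal positive definite matrix such that (M^k)ᵀ P^k M^k − P^k is negative definite. Set σ_1^k = λ_min(P^k), σ_2^k = λ_max(P^k), and σ_3^k = λ_min(P^k − (M^k)ᵀ P^k M^k). Then x^k[t] converges to zero with exponential rate at least √(1 − σ_3^k/σ_2^k); in particular ‖x^k[t]‖ ≤ √(σ_2^k/σ_1^k) · ‖x^k[0]‖ · (√(1 − σ_3^k/σ_2^k))^t for all t ∈ ℤ_{≥0}. -/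
/-!
Since the susceptible fraction stays in `[0, 1]`, the infection vector of virus `k` satisfies
`0 ≤ x[t+1] ≤ M x[t]` entrywise. As `P` is diagonal with positive entries, the Lyapunov function
`V(t) = x[t]ᵀ P x[t]` is monotone in that order, so
`V(t+1) ≤ (M x[t])ᵀ P (M x[t]) = V(t) - x[t]ᵀ (P - Mᵀ P M) x[t] ≤ (1 - σ₃/σ₂) V(t)`.
Iterating and comparing `V` with `‖x‖²` through `σ₁ ‖x‖² ≤ V ≤ σ₂ ‖x‖²` gives the bound.
-/

open Matrix
open scoped MatrixOrder

section Rayleigh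

variable {ι : Type*} [Fintype ι] [DecidableEq ι]

theorem Matrix.IsHermitian.iInf_eigenvalues_mul_dotProduct_self_le {A : Matrix ι ι ℝ}
    (hA : A.IsHermitian) (v : ι → ℝ) : (⨅ i, hA.eigenvalues i) * (v ⬝ᵥ v) ≤ v ⬝ᵥ A *ᵥ v := by
  have hle : algebraMap ℝ (Matrix ι ι ℝ) (⨅ i, hA.eigenvalues i) ≤ A := by
    rw [algebraMap_le_iff_le_spectrum hA.isSelfAdjoint, hA.spectrum_real_eq_range_eigenvalues]
    rintro _ ⟨i, rfl⟩
    exact ciInf_le (Set.finite_range _).bddBelow i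
  simpa [Algebra.algebraMap_eq_smul_one, sub_mulVec, dotProduct_sub, smul_mulVec] using
    (le_iff.1 hle).dotProduct_mulVec_nonneg v

theorem Matrix.IsHermitian.dotProduct_mulVec_le_iSup_eigenvalues_mul {A : Matrix ι ι ℝ}
    (hA : A.IsHermitian) (v : ι → ℝ) : v ⬝ᵥ A *ᵥ v ≤ (⨆ i, hA.eigenvalues i) * (v ⬝ᵥ v) := by
  have hle : A ≤ algebraMap ℝ (Matrix ι ι ℝ) (⨆ i, hA.eigenvalues i) := by
    rw [le_algebraMap_iff_spectrum_le hA.isSelfAdjoint, hA.spectrum_real_eq_range_eigenvalues]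
    rintro _ ⟨i, rfl⟩
    exact le_ciSup (Set.finite_range _).bddAbove i
  simpa [Algebra.algebraMap_eq_smul_one, sub_mulVec, dotProduct_sub, smul_mulVec] using
    (le_iff.1 hle).dotProduct_mulVec_nonneg v

variable [Nonempty ι]

theorem Matrix.PosDef.iInf_eigenvalues_pos {A : Matrix ι ι ℝ} (hA : A.PosDef) :
    0 < ⨅ i, hA.isHermitian.eigenvalues i := by
  obtain ⟨i, hi⟩ := exists_eq_ciInf_of_finite (f := hA.isHermitian.eigenvalues)
  exact hi ▸ hA.eigenvalues_pos i

theorem Matrix.PosDef.iSup_eigenvalues_pos {A : Matrix ι ι ℝ} (hA : A.PosDef) :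
    0 < ⨆ i, hA.isHermitian.eigenvalues i :=
  hA.iInf_eigenvalues_pos.trans_le <|
    ciInf_le_ciSup (Set.finite_range _).bddBelow (Set.finite_range _).bddAbove

theorem Matrix.PosSemidef.iInf_eigenvalues_nonneg {A : Matrix ι ι ℝ} (hA : A.PosSemidef) :
    0 ≤ ⨅ i, hA.isHermitian.eigenvalues i :=
  le_ciInf hA.eigenvalues_nonneg

end Rayleigh

section Lyapunov

variable {ι : Type*} [Fintype ι] {P M : Matrix ι ι ℝ}

theorem dotProduct_sub_transpose_mul_mul_mulVec (v : ι → ℝ) :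
    v ⬝ᵥ (P - Mᵀ * P * M) *ᵥ v = v ⬝ᵥ P *ᵥ v - (M *ᵥ v) ⬝ᵥ P *ᵥ (M *ᵥ v) := by
  rw [sub_mulVec, dotProduct_sub, ← mulVec_mulVec, ← mulVec_mulVec, dotProduct_mulVec v Mᵀ,
    vecMul_transpose]

theorem Matrix.IsDiag.dotProduct_mulVec_self_le_of_le (hPdiag : P.IsDiag) (hP : P.PosSemidef)
    {u w : ι → ℝ} (hu : 0 ≤ u) (huw : u ≤ w) : u ⬝ᵥ P *ᵥ u ≤ w ⬝ᵥ P *ᵥ w := by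
  classical
  rw [← hPdiag.diagonal_diag]
  simp only [dotProduct, mulVec_diagonal, diag_apply]
  refine Finset.sum_le_sum fun i _ => ?_
  have := mul_le_mul (huw i) (huw i) (hu i) ((hu i).trans (huw i))
  nlinarith [hP.diag_nonneg (i := i)]

variable [DecidableEq ι] [Nonempty ι]

theorem dotProduct_mulVec_mulVec_le_of_posDef (hP : P.PosDef) (hQ : (P - Mᵀ * P * M).PosSemidef)
    (v : ι → ℝ) :
    (M *ᵥ v) ⬝ᵥ P *ᵥ (M *ᵥ v) ≤ (1 - (⨅ i, hQ.isHermitian.eigenvalues i)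
      / (⨆ i, hP.isHermitian.eigenvalues i)) * (v ⬝ᵥ P *ᵥ v) := by
  set σ₂ := ⨆ i, hP.isHermitian.eigenvalues i
  set σ₃ := ⨅ i, hQ.isHermitian.eigenvalues i
  have hσ₂ : 0 < σ₂ := hP.iSup_eigenvalues_pos
  have hQv := hQ.isHermitian.iInf_eigenvalues_mul_dotProduct_self_le v
  rw [dotProduct_sub_transpose_mul_mul_mulVec] at hQv
  have hPv : σ₃ / σ₂ * (v ⬝ᵥ P *ᵥ v) ≤ σ₃ * (v ⬝ᵥ v) :=
    calc σ₃ / σ₂ * (v ⬝ᵥ P *ᵥ v) ≤ σ₃ / σ₂ * (σ₂ * (v ⬝ᵥ v)) :=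
          mul_le_mul_of_nonneg_left (hP.isHermitian.dotProduct_mulVec_le_iSup_eigenvalues_mul v)
            (div_nonneg hQ.iInf_eigenvalues_nonneg hσ₂.le)
      _ = σ₃ * (v ⬝ᵥ v) := by field_simp
  linarith

theorem one_sub_iInf_div_iSup_eigenvalues_nonneg (hP : P.PosDef)
    (hQ : (P - Mᵀ * P * M).PosSemidef) :
    0 ≤ 1 - (⨅ i, hQ.isHermitian.eigenvalues i) / (⨆ i, hP.isHermitian.eigenvalues i) := by
  have hv : (fun _ => 1 : ι → ℝ) ≠ 0 := fun h => one_ne_zero (congrFun h (Classical.arbitrary ι))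
  have hpos : 0 < (fun _ => 1 : ι → ℝ) ⬝ᵥ P *ᵥ fun _ => 1 := by
    simpa using hP.dotProduct_mulVec_pos hv
  refine nonneg_of_mul_nonneg_left ?_ hpos
  exact (hP.posSemidef.dotProduct_mulVec_nonneg _).trans
    (dotProduct_mulVec_mulVec_le_of_posDef hP hQ _)

theorem sqrt_sum_sq_le_of_dotProduct_mulVec_le_mul (hP : P.PosDef) {ρ : ℝ} (hρ : 0 ≤ ρ)
    {y : ℕ → ι → ℝ} (hy : ∀ t, y (t + 1) ⬝ᵥ P *ᵥ y (t + 1) ≤ ρ * (y t ⬝ᵥ P *ᵥ y t)) (t : ℕ) :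
    √(∑ i, y t i ^ 2) ≤ √((⨆ i, hP.isHermitian.eigenvalues i) / (⨅ i, hP.isHermitian.eigenvalues i))
      * √(∑ i, y 0 i ^ 2) * √ρ ^ t := by
  set σ₁ := ⨅ i, hP.isHermitian.eigenvalues i
  set σ₂ := ⨆ i, hP.isHermitian.eigenvalues i
  have hσ₁ : 0 < σ₁ := hP.iInf_eigenvalues_pos
  have hsq : ∀ v : ι → ℝ, ∑ i, v i ^ 2 = v ⬝ᵥ v := fun v => by simp [dotProduct, sq]
  have key : y t ⬝ᵥ y t ≤ σ₂ / σ₁ * (y 0 ⬝ᵥ y 0) * ρ ^ t := by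
    rw [div_mul_eq_mul_div, div_mul_eq_mul_div, le_div_iff₀ hσ₁]
    calc y t ⬝ᵥ y t * σ₁ ≤ y t ⬝ᵥ P *ᵥ y t := by
          linarith [hP.isHermitian.iInf_eigenvalues_mul_dotProduct_self_le (y t)]
      _ ≤ ρ ^ t * (y 0 ⬝ᵥ P *ᵥ y 0) := le_geom (u := fun t => y t ⬝ᵥ P *ᵥ y t) hρ t fun k _ => hy k
      _ ≤ ρ ^ t * (σ₂ * (y 0 ⬝ᵥ y 0)) := mul_le_mul_of_nonneg_left
          (hP.isHermitian.dotProduct_mulVec_le_iSup_eigenvalues_mul _) (pow_nonneg hρ t)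
      _ = σ₂ * (y 0 ⬝ᵥ y 0) * ρ ^ t := by ring
  have hsqrt_pow : √(ρ ^ t) = √ρ ^ t := by
    rw [← Real.sqrt_sq (pow_nonneg (Real.sqrt_nonneg ρ) t), ← pow_mul, mul_comm, pow_mul,
      Real.sq_sqrt hρ]
  rw [hsq, hsq]
  calc √(y t ⬝ᵥ y t) ≤ √(σ₂ / σ₁ * (y 0 ⬝ᵥ y 0) * ρ ^ t) := Real.sqrt_le_sqrt key
    _ = √(σ₂ / σ₁) * √(y 0 ⬝ᵥ y 0) * √ρ ^ t := by
      rw [Real.sqrt_mul' _ (pow_nonneg hρ t), Real.sqrt_mul' _ (hsq (y 0) ▸ by positivity),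
        hsqrt_pow]

end Lyapunov

section SIR

variable {ι κ : Type*} [Fintype κ]

/-- The recovered fraction is the slack `1 - s i - ∑ k, x k i`; only its nonnegativity matters. -/
structure IsSIRState_s3 (s : ι → ℝ) (x : κ → ι → ℝ) : Prop where
  susceptible_nonneg : ∀ i, 0 ≤ s i
  infected_nonneg : ∀ k i, 0 ≤ x k i
  add_sum_infected_le_one : ∀ i, s i + ∑ k, x k i ≤ 1

namespace IsSIRState_s3

variable {s : ι → ℝ} {x : κ → ι → ℝ}

theorem infected_le_one (hsx : IsSIRState_s3 s x) (k : κ) (i : ι) : x k i ≤ 1 := by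
  have := Finset.single_le_sum (fun k _ => hsx.infected_nonneg k i) (Finset.mem_univ k)
  linarith [hsx.add_sum_infected_le_one i, hsx.susceptible_nonneg i]

theorem susceptible_le_one (hsx : IsSIRState_s3 s x) (i : ι) : s i ≤ 1 := by
  have := Finset.sum_nonneg fun k (_ : k ∈ Finset.univ) => hsx.infected_nonneg k i
  linarith [hsx.add_sum_infected_le_one i]

end IsSIRState_s3

variable [Fintype ι] {h : ℝ} {β : κ → ι → ι → ℝ} {γ : κ → ι → ℝ}

theorem IsSIRState_s3.step {s : ι → ℝ} {x : κ → ι → ℝ} (hh : 0 ≤ h)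
    (hβ : ∀ k i j, 0 ≤ β k i j) (hγ : ∀ k i, 0 ≤ γ k i)
    (hβsum : ∀ i, h * (∑ k, ∑ j, β k i j) ≤ 1) (hγsum : ∀ i, h * (∑ k, γ k i) ≤ 1)
    {s' : ι → ℝ} {x' : κ → ι → ℝ}
    (hs' : ∀ i, s' i = s i - h * (s i * ∑ k, ∑ j, β k i j * x k j))
    (hx' : ∀ k i, x' k i = x k i + h * (s i * (∑ j, β k i j * x k j) - γ k i * x k i))
    (hsx : IsSIRState_s3 s x) : IsSIRState_s3 s' x' := by
  have hforce : ∀ k i, 0 ≤ ∑ j, β k i j * x k j := fun k i =>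
    Finset.sum_nonneg fun j _ => mul_nonneg (hβ k i j) (hsx.infected_nonneg k j)
  have hforce_le : ∀ i, h * ∑ k, ∑ j, β k i j * x k j ≤ 1 := fun i =>
    calc h * ∑ k, ∑ j, β k i j * x k j ≤ h * ∑ k, ∑ j, β k i j := by
          gcongr with k _ j _
          exact mul_le_of_le_one_right (hβ k i j) (hsx.infected_le_one k j)
      _ ≤ 1 := hβsum i
  have hheal_le : ∀ k i, h * γ k i ≤ 1 := fun k i =>
    calc h * γ k i ≤ h * ∑ k, γ k i := by
          gcongr
          exact Finset.single_le_sum (fun k _ => hγ k i) (Finset.mem_univ k)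
      _ ≤ 1 := hγsum i
  refine ⟨fun i => ?_, fun k i => ?_, fun i => ?_⟩
  · rw [hs' i]
    nlinarith [hsx.susceptible_nonneg i, hforce_le i]
  · rw [hx' k i]
    nlinarith [hsx.infected_nonneg k i, hsx.susceptible_nonneg i, hforce k i, hheal_le k i,
      mul_nonneg hh (mul_nonneg (hsx.susceptible_nonneg i) (hforce k i))]
  · have hhealed : 0 ≤ h * ∑ k, γ k i * x k i :=
      mul_nonneg hh (Finset.sum_nonneg fun k _ => mul_nonneg (hγ k i) (hsx.infected_nonneg k i))
    have hsum : s' i + ∑ k, x' k i = s i + ∑ k, x k i - h * ∑ k, γ k i * x k i := by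
      simp only [hs', hx', Finset.sum_add_distrib, ← Finset.mul_sum, mul_sub,
        Finset.sum_sub_distrib]
      ring
    linarith [hsx.add_sum_infected_le_one i]

theorem isSIRState_of_isSIRState_zero (hh : 0 ≤ h)
    (hβ : ∀ k i j, 0 ≤ β k i j) (hγ : ∀ k i, 0 ≤ γ k i)
    (hβsum : ∀ i, h * (∑ k, ∑ j, β k i j) ≤ 1) (hγsum : ∀ i, h * (∑ k, γ k i) ≤ 1)
    {s : ℕ → ι → ℝ} {x : ℕ → κ → ι → ℝ}
    (hs : ∀ t i, s (t + 1) i = s t i - h * (s t i * ∑ k, ∑ j, β k i j * x t k j))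
    (hx : ∀ t k i, x (t + 1) k i
      = x t k i + h * (s t i * (∑ j, β k i j * x t k j) - γ k i * x t k i))
    (h0 : IsSIRState_s3 (s 0) (x 0)) (t : ℕ) : IsSIRState_s3 (s t) (x t) := by
  induction t with
  | zero => exact h0
  | succ t ih => exact ih.step hh hβ hγ hβsum hγsum (hs t) (hx t)

theorem mulVec_le_of_infection_step [DecidableEq ι] {b : ι → ι → ℝ} {g s y y' : ι → ℝ}
    (hh : 0 ≤ h) (hb : ∀ i j, 0 ≤ b i j) (hs : ∀ i, s i ≤ 1) (hy : 0 ≤ y)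
    (hy' : ∀ i, y' i = y i + h * (s i * (∑ j, b i j * y j) - g i * y i)) :
    y' ≤ (1 - h • diagonal g + h • of b) *ᵥ y := by
  intro i
  have hforce : 0 ≤ ∑ j, b i j * y j := Finset.sum_nonneg fun j _ => mul_nonneg (hb i j) (hy j)
  have hmulVec : ((1 - h • diagonal g + h • of b) *ᵥ y) i
      = y i - h * (g i * y i) + h * ∑ j, b i j * y j := by
    rw [add_mulVec, sub_mulVec, one_mulVec, smul_mulVec, smul_mulVec]
    simp only [Pi.add_apply, Pi.sub_apply, Pi.smul_apply, smul_eq_mul, mulVec_diagonal]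
    rfl
  rw [hy' i, hmulVec]
  nlinarith [mul_nonneg (mul_nonneg hh (sub_nonneg.2 (hs i))) hforce]

end SIR

theorem multiVirusSIR_exponential_rate_general
    (n m : ℕ) (hn : 0 < n) (h : ℝ) (hh : 0 < h)
    (β : Fin m → Fin n → Fin n → ℝ) (γ : Fin m → Fin n → ℝ)
    (hβ : ∀ k i j, 0 ≤ β k i j) (hγ : ∀ k i, 0 < γ k i)
    (hβsum : ∀ i, h * (∑ k, ∑ j, β k i j) ≤ 1)
    (hγsum : ∀ i, h * (∑ k, γ k i) ≤ 1)
    (s : ℕ → Fin n → ℝ) (x : ℕ → Fin m → Fin n → ℝ) (r : ℕ → Fin n → ℝ)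
    (hs : ∀ t i, s (t + 1) i = s t i - h * (s t i * ∑ k, ∑ j, β k i j * x t k j))
    (hx : ∀ t k i, x (t + 1) k i
      = x t k i + h * (s t i * (∑ j, β k i j * x t k j) - γ k i * x t k i))
    (hinit : ∀ i, s 0 i ∈ Set.Icc (0 : ℝ) 1 ∧ (∀ k, x 0 k i ∈ Set.Icc (0 : ℝ) 1) ∧
      r 0 i ∈ Set.Icc (0 : ℝ) 1 ∧ s 0 i + (∑ k, x 0 k i) + r 0 i = 1)
    (k : Fin m)
    (M : Matrix (Fin n) (Fin n) ℝ)
    (hM : M = 1 - h • Matrix.diagonal (γ k) + h • Matrix.of (β k))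
    (P : Matrix (Fin n) (Fin n) ℝ) (hPdiag : P.IsDiag) (hP : P.PosDef)
    (hQ : (P - Mᵀ * P * M).PosDef) :
    ∀ t : ℕ, Real.sqrt (∑ i, (x t k i) ^ 2)
      ≤ Real.sqrt ((⨆ i, hP.isHermitian.eigenvalues i) / (⨅ i, hP.isHermitian.eigenvalues i))
        * Real.sqrt (∑ i, (x 0 k i) ^ 2)
        * (Real.sqrt (1 - (⨅ i, hQ.isHermitian.eigenvalues i)
            / (⨆ i, hP.isHermitian.eigenvalues i))) ^ t := by
  have : Nonempty (Fin n) := ⟨⟨0, hn⟩⟩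
  have hstate₀ : IsSIRState_s3 (s 0) (x 0) :=
    ⟨fun i => (hinit i).1.1, fun k i => ((hinit i).2.1 k).1,
      fun i => by linarith [(hinit i).2.2.1.1, (hinit i).2.2.2]⟩
  have hstate :=
    isSIRState_of_isSIRState_zero hh.le hβ (fun k i => (hγ k i).le) hβsum hγsum hs hx hstate₀
  have hdecay : ∀ t, x (t + 1) k ⬝ᵥ P *ᵥ x (t + 1) k
      ≤ (1 - (⨅ i, hQ.isHermitian.eigenvalues i) / (⨆ i, hP.isHermitian.eigenvalues i))
        * (x t k ⬝ᵥ P *ᵥ x t k) := fun t =>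
    calc x (t + 1) k ⬝ᵥ P *ᵥ x (t + 1) k ≤ (M *ᵥ x t k) ⬝ᵥ P *ᵥ (M *ᵥ x t k) :=
          hPdiag.dotProduct_mulVec_self_le_of_le hP.posSemidef
            ((hstate (t + 1)).infected_nonneg k)
            (hM ▸ mulVec_le_of_infection_step hh.le (hβ k) (hstate t).susceptible_le_one
              ((hstate t).infected_nonneg k) (hx t k))
      _ ≤ _ := dotProduct_mulVec_mulVec_le_of_posDef hP hQ.posSemidef _
  exact sqrt_sum_sq_le_of_dotProduct_mulVec_le_mul hP
    (one_sub_iInf_div_iSup_eigenvalues_nonneg hP hQ.posSemidef) hdecay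

/-- Corollary 1 of the paper: with a diagonal positive definite `P^k` such that
`(M^k)ᵀ P^k M^k - P^k ≺ 0`, the infection level of virus `k` converges to zero
with exponential rate at least `√(1 - σ₃/σ₂)`, and in particular
`‖x^k[t]‖ ≤ √(σ₂/σ₁) ‖x^k[0]‖ (√(1 - σ₃/σ₂))^t`. -/
theorem multiVirusSIR_exponential_rate
    (n m : ℕ) (hn : 0 < n) (hm : 0 < m) (h : ℝ) (hh : 0 < h)
    (β : Fin m → Fin n → Fin n → ℝ) (γ : Fin m → Fin n → ℝ)
    (hβ : ∀ k i j, 0 ≤ β k i j) (hγ : ∀ k i, 0 < γ k i)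
    (hβsum : ∀ i, h * (∑ k, ∑ j, β k i j) ≤ 1)
    (hγsum : ∀ i, h * (∑ k, γ k i) ≤ 1)
    (s : ℕ → Fin n → ℝ) (x : ℕ → Fin m → Fin n → ℝ) (r : ℕ → Fin n → ℝ)
    (hs : ∀ t i, s (t + 1) i = s t i - h * (s t i * ∑ k, ∑ j, β k i j * x t k j))
    (hx : ∀ t k i, x (t + 1) k i
      = x t k i + h * (s t i * (∑ j, β k i j * x t k j) - γ k i * x t k i))
    (hr : ∀ t i, r (t + 1) i = r t i + h * ∑ k, γ k i * x t k i)
    (hinit : ∀ i, s 0 i ∈ Set.Icc (0 : ℝ) 1 ∧ (∀ k, x 0 k i ∈ Set.Icc (0 : ℝ) 1) ∧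
      r 0 i ∈ Set.Icc (0 : ℝ) 1 ∧ s 0 i + (∑ k, x 0 k i) + r 0 i = 1)
    (k : Fin m)
    (M : Matrix (Fin n) (Fin n) ℝ)
    (hM : M = 1 - h • Matrix.diagonal (γ k) + h • Matrix.of (β k))
    (P : Matrix (Fin n) (Fin n) ℝ) (hPdiag : P.IsDiag) (hP : P.PosDef)
    (hQ : (P - Mᵀ * P * M).PosDef) :
    ∀ t : ℕ, Real.sqrt (∑ i, (x t k i) ^ 2)
      ≤ Real.sqrt ((⨆ i, hP.isHermitian.eigenvalues i) / (⨅ i, hP.isHermitian.eigenvalues i))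
        * Real.sqrt (∑ i, (x 0 k i) ^ 2)
        * (Real.sqrt (1 - (⨅ i, hQ.isHermitian.eigenvalues i)
            / (⨆ i, hP.isHermitian.eigenvalues i))) ^ t :=
  multiVirusSIR_exponential_rate_general n m hn h hh β γ hβ hγ hβsum hγsum s x r hs hx hinit k M hM
    P hPdiag hP hQ
end

section
/- Let h > 0, let B be an entrywise nonnegative n×n matrix, let Γ = diag(γ_1,…,γ_n) with 0 < h·γ_i ≤ 1 for all i, let S = diag(s_1,…,s_n) with s_i ∈ [0,1] for all i, let P be a diagonal positive definite n×n matrix, and set M = I − hΓ + hB. Then for every entrywise nonnegative vector x ∈ ℝ^n: xᵀ(−2h·Bᵀ(I−S)PM + h²·Bᵀ(I−S)P(I−S)B)x ≤ 0. -/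
open Matrix

/-- The key cross-term inequality in the Lyapunov analysis (Eq. (12) of the paper):
for `M = I - hΓ + hB`, nonnegative `B`, `0 < hγᵢ ≤ 1`, `S = diag(sᵢ)` with
`sᵢ ∈ [0,1]`, and diagonal positive definite `P`, the quadratic form
`xᵀ(-2h Bᵀ(I-S)PM + h² Bᵀ(I-S)P(I-S)B)x` is nonpositive on nonnegative vectors. -/
theorem crossTerm_nonpositive
    (n : ℕ) (h : ℝ) (hh : 0 < h)
    (B : Matrix (Fin n) (Fin n) ℝ) (hB : ∀ i j, 0 ≤ B i j)
    (γ : Fin n → ℝ) (hγ : ∀ i, 0 < h * γ i) (hγ1 : ∀ i, h * γ i ≤ 1)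
    (sv : Fin n → ℝ) (hsv : ∀ i, sv i ∈ Set.Icc (0 : ℝ) 1)
    (P : Matrix (Fin n) (Fin n) ℝ) (hPdiag : P.IsDiag) (hP : P.PosDef)
    (M : Matrix (Fin n) (Fin n) ℝ)
    (hM : M = 1 - h • Matrix.diagonal γ + h • B)
    (x : Fin n → ℝ) (hx : ∀ i, 0 ≤ x i) :
    x ⬝ᵥ (((-(2 * h)) • (Bᵀ * (1 - Matrix.diagonal sv) * P * M)
        + (h ^ 2) • (Bᵀ * (1 - Matrix.diagonal sv) * P * (1 - Matrix.diagonal sv) * B)) *ᵥ x)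
      ≤ 0 := by
  -- P is diagonal
  have hPeq : P = Matrix.diagonal (fun i => P i i) := by
    ext i j
    by_cases hij : i = j
    · subst hij; simp
    · simp [Matrix.diagonal_apply_ne _ hij, hPdiag hij]
  have hp : ∀ i, 0 < P i i := by
    rw [hPeq] at hP
    exact Matrix.posDef_diagonal_iff.mp hP
  set y : Fin n → ℝ := B *ᵥ x with hy
  have hyn : ∀ i, 0 ≤ y i := by
    intro i
    rw [hy]
    simp only [Matrix.mulVec, dotProduct]
    exact Finset.sum_nonneg fun j _ => mul_nonneg (hB i j) (hx j)
  -- (1 - diagonal sv) as a diagonal matrix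
  have hE : (1 - Matrix.diagonal sv) = Matrix.diagonal (fun i => 1 - sv i) := by
    rw [← Matrix.diagonal_one, ← Matrix.diagonal_sub]
  set d : Fin n → ℝ := fun i => (1 - sv i) * P i i with hd
  set e : Fin n → ℝ := fun i => (1 - sv i) * P i i * (1 - sv i) with he
  have hD : (1 - Matrix.diagonal sv) * P = Matrix.diagonal d := by
    rw [hE, hPeq, Matrix.diagonal_mul_diagonal]
  have hDE : (1 - Matrix.diagonal sv) * P * (1 - Matrix.diagonal sv)
      = Matrix.diagonal e := by
    rw [hD, hE, Matrix.diagonal_mul_diagonal]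
  set mx : Fin n → ℝ := M *ᵥ x with hmx
  have hmxi : ∀ i, mx i = (1 - h * γ i) * x i + h * y i := by
    intro i
    rw [hmx, hM]
    simp [Matrix.add_mulVec, Matrix.sub_mulVec, Matrix.smul_mulVec,
      Matrix.mulVec_diagonal, ← hy]
    ring
  -- rewrite quadratic form
  have key : x ⬝ᵥ (((-(2 * h)) • (Bᵀ * (1 - Matrix.diagonal sv) * P * M)
        + (h ^ 2) • (Bᵀ * (1 - Matrix.diagonal sv) * P * (1 - Matrix.diagonal sv) * B)) *ᵥ x)
      = ∑ i, ((-(2 * h)) * (y i * (d i * mx i)) + h ^ 2 * (y i * (e i * y i))) := by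
    rw [Matrix.add_mulVec, dotProduct_add, Matrix.smul_mulVec,
      Matrix.smul_mulVec, dotProduct_smul, dotProduct_smul]
    have h1 : (Bᵀ * (1 - Matrix.diagonal sv) * P * M) *ᵥ x
        = Bᵀ *ᵥ (Matrix.diagonal d *ᵥ mx) := by
      rw [show Bᵀ * (1 - Matrix.diagonal sv) * P * M
          = Bᵀ * (((1 - Matrix.diagonal sv) * P) * M) by noncomm_ring, hD,
        ← Matrix.mulVec_mulVec, ← Matrix.mulVec_mulVec, hmx]
    have h2 : (Bᵀ * (1 - Matrix.diagonal sv) * P * (1 - Matrix.diagonal sv) * B) *ᵥ x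
        = Bᵀ *ᵥ (Matrix.diagonal e *ᵥ y) := by
      rw [show Bᵀ * (1 - Matrix.diagonal sv) * P * (1 - Matrix.diagonal sv) * B
          = Bᵀ * (((1 - Matrix.diagonal sv) * P * (1 - Matrix.diagonal sv)) * B) by
            noncomm_ring, hDE, ← Matrix.mulVec_mulVec, ← Matrix.mulVec_mulVec, hy]
    rw [h1, h2]
    have h3 : ∀ w : Fin n → ℝ, x ⬝ᵥ (Bᵀ *ᵥ w) = y ⬝ᵥ w := by
      intro w
      rw [Matrix.dotProduct_mulVec, Matrix.vecMul_transpose, ← hy]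
    rw [h3, h3]
    simp only [dotProduct, Matrix.mulVec_diagonal, smul_eq_mul,
      Finset.mul_sum, ← Finset.sum_add_distrib]
  rw [key]
  apply Finset.sum_nonpos
  intro i _
  have hs0 := (hsv i).1
  have hs1 := (hsv i).2
  have hdi : 0 ≤ d i := mul_nonneg (by linarith) (hp i).le
  have hmxge : h * y i ≤ mx i := by
    rw [hmxi i]
    nlinarith [mul_nonneg (sub_nonneg.mpr (hγ1 i)) (hx i)]
  have hei : e i = d i * (1 - sv i) := by rw [he, hd]
  rw [hei]
  nlinarith [mul_nonneg hdi (hyn i), mul_nonneg (mul_nonneg hdi (hyn i)) (hyn i),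
    mul_le_mul_of_nonneg_left hmxge (mul_nonneg hdi (hyn i)),
    mul_nonneg (mul_nonneg hdi (mul_nonneg (hyn i) (hyn i))) hs0]
end

section
/- Suppose s_i[0], x^k_i[0], r_i[0] ∈ [0,1] and s_i[0] + ∑_{k=1}^m x^k_i[0] + r_i[0] = 1 for all i, k. Fix a virus index k ∈ {1,…,m}, let M^k = I − hΓ^k + hB^k, and let P^k be any diagonal positive definite n×n matrix. Then along trajectories of the model, for every t ∈ ℤ_{≥0}: (x^k[t+1])ᵀ P^k x^k[t+1] − (x^k[t])ᵀ P^k x^k[t] ≤ (x^k[t])ᵀ ((M^k)ᵀ P^k M^k − P^k) x^k[t]. -/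
/-!
Only the susceptible fraction `s` separates the true infection update from the linear one
`x ↦ M x`: since `0 ≤ s ≤ 1` and the infection term is nonnegative, `0 ≤ x[t+1] ≤ M x[t]`
componentwise. These bounds come from the invariant that all compartments stay nonnegative
and the mass `s + ∑ₖ xᵏ` never exceeds `1` (it only decreases, by healing). A diagonal
quadratic form with nonnegative weights is monotone on nonnegative vectors, so
`x[t+1]ᵀ P x[t+1] ≤ (M x[t])ᵀ P (M x[t]) = x[t]ᵀ (Mᵀ P M) x[t]`.
-/

open Matrix Finset

theorem Matrix.dotProduct_transpose_mul_mul_mulVec {R ι κ : Type*} [CommSemiring R]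
    [Fintype ι] [Fintype κ] (M : Matrix κ ι R) (P : Matrix κ κ R) (v : ι → R) :
    v ⬝ᵥ ((Mᵀ * P * M) *ᵥ v) = (M *ᵥ v) ⬝ᵥ (P *ᵥ (M *ᵥ v)) := by
  rw [← mulVec_mulVec, ← mulVec_mulVec, dotProduct_mulVec, vecMul_transpose]

theorem Matrix.IsDiag.dotProduct_mulVec_self_le {R ι : Type*} [CommSemiring R] [PartialOrder R]
    [IsOrderedRing R] [Fintype ι] {P : Matrix ι ι R} (hP : P.IsDiag) (hPnn : ∀ i, 0 ≤ P i i)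
    {u v : ι → R} (hu : 0 ≤ u) (huv : u ≤ v) :
    u ⬝ᵥ (P *ᵥ u) ≤ v ⬝ᵥ (P *ᵥ v) := by
  classical
  rw [← hP.diagonal_diag]
  simp only [dotProduct, mulVec_diagonal, diag_apply]
  refine sum_le_sum fun i _ => ?_
  exact mul_le_mul (huv i) (mul_le_mul_of_nonneg_left (huv i) (hPnn i))
    (mul_nonneg (hPnn i) (hu i)) ((hu i).trans (huv i))

theorem Matrix.one_sub_smul_diagonal_add_smul_of_mulVec_apply {R ι : Type*} [CommRing R]
    [Fintype ι] [DecidableEq ι] (h : R) (γ : ι → R) (β : ι → ι → R) (y : ι → R) (i : ι) :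
    ((1 - h • diagonal γ + h • of β) *ᵥ y) i = y i + h * ((∑ j, β i j * y j) - γ i * y i) := by
  rw [add_mulVec, sub_mulVec, one_mulVec, smul_mulVec, smul_mulVec]
  simp only [Pi.add_apply, Pi.sub_apply, Pi.smul_apply, smul_eq_mul, mulVec_diagonal]
  simp only [mulVec, dotProduct, of_apply]
  ring

section SIR

variable {ι κ : Type*} [Fintype κ]

def SIRFeasible (s : ι → ℝ) (x : κ → ι → ℝ) : Prop :=
  ∀ i, 0 ≤ s i ∧ (∀ k, 0 ≤ x k i) ∧ s i + ∑ k, x k i ≤ 1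

namespace SIRFeasible

variable {s : ι → ℝ} {x : κ → ι → ℝ}

theorem s_le_one (hf : SIRFeasible s x) (i : ι) : s i ≤ 1 := by
  obtain ⟨-, hx, hsum⟩ := hf i
  linarith [sum_nonneg fun k (_ : k ∈ univ) => hx k]

theorem x_le_one (hf : SIRFeasible s x) (k : κ) (i : ι) : x k i ≤ 1 := by
  obtain ⟨hs, hx, hsum⟩ := hf i
  linarith [single_le_sum (fun l (_ : l ∈ univ) => hx l) (mem_univ k)]

theorem step [Fintype ι] (hf : SIRFeasible s x) {h : ℝ} (hh : 0 ≤ h)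
    {β : κ → ι → ι → ℝ} {γ : κ → ι → ℝ} (hβ : ∀ k i j, 0 ≤ β k i j) (hγ : ∀ k i, 0 ≤ γ k i)
    (hβsum : ∀ i, h * (∑ k, ∑ j, β k i j) ≤ 1) (hγsum : ∀ i, h * (∑ k, γ k i) ≤ 1)
    {s' : ι → ℝ} {x' : κ → ι → ℝ}
    (hs : ∀ i, s' i = s i - h * (s i * ∑ k, ∑ j, β k i j * x k j))
    (hx : ∀ k i, x' k i = x k i + h * (s i * (∑ j, β k i j * x k j) - γ k i * x k i)) :
    SIRFeasible s' x' := by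
  intro i
  obtain ⟨hsi, hxi, hmass⟩ := hf i
  have hinf : ∀ k, 0 ≤ ∑ j, β k i j * x k j :=
    fun k => sum_nonneg fun j _ => mul_nonneg (hβ k i j) ((hf j).2.1 k)
  have hpressure : h * ∑ k, ∑ j, β k i j * x k j ≤ 1 :=
    (mul_le_mul_of_nonneg_left (sum_le_sum fun k _ => sum_le_sum fun j _ =>
      mul_le_of_le_one_right (hβ k i j) (hf.x_le_one k j)) hh).trans (hβsum i)
  have hheal : ∀ k, h * γ k i ≤ 1 := fun k =>
    (mul_le_mul_of_nonneg_left (single_le_sum (fun l _ => hγ l i) (mem_univ k)) hh).trans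
      (hγsum i)
  have hmass' : ∑ k, x' k i
      = ∑ k, x k i + h * (s i * ∑ k, ∑ j, β k i j * x k j) - h * ∑ k, γ k i * x k i := by
    simp only [hx, sum_add_distrib, ← mul_sum, sum_sub_distrib]
    ring
  refine ⟨?_, fun k => ?_, ?_⟩
  · rw [hs]
    nlinarith [mul_nonneg hsi (sub_nonneg.2 hpressure)]
  · rw [hx]
    nlinarith [mul_nonneg (hxi k) (sub_nonneg.2 (hheal k)), mul_nonneg (mul_nonneg hh hsi) (hinf k)]
  · rw [hs, hmass']
    nlinarith [mul_nonneg hh (sum_nonneg fun k (_ : k ∈ univ) => mul_nonneg (hγ k i) (hxi k))]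

theorem infected_le_mulVec [Fintype ι] [DecidableEq ι] (hf : SIRFeasible s x) {h : ℝ} (hh : 0 ≤ h)
    {β : κ → ι → ι → ℝ} {γ : κ → ι → ℝ} (hβ : ∀ k i j, 0 ≤ β k i j) {x' : κ → ι → ℝ}
    (hx : ∀ k i, x' k i = x k i + h * (s i * (∑ j, β k i j * x k j) - γ k i * x k i))
    (k : κ) (i : ι) :
    x' k i ≤ ((1 - h • diagonal (γ k) + h • of (β k)) *ᵥ x k) i := by
  have hinf : 0 ≤ ∑ j, β k i j * x k j :=
    sum_nonneg fun j _ => mul_nonneg (hβ k i j) ((hf j).2.1 k)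
  rw [hx, one_sub_smul_diagonal_add_smul_of_mulVec_apply]
  nlinarith [mul_nonneg (mul_nonneg hh (sub_nonneg.2 (hf.s_le_one i))) hinf]

end SIRFeasible

end SIR

theorem multiVirusSIR_lyapunov_decrement_general
    (n m : ℕ) (h : ℝ) (hh : 0 < h)
    (β : Fin m → Fin n → Fin n → ℝ) (γ : Fin m → Fin n → ℝ)
    (hβ : ∀ k i j, 0 ≤ β k i j) (hγ : ∀ k i, 0 < γ k i)
    (hβsum : ∀ i, h * (∑ k, ∑ j, β k i j) ≤ 1)
    (hγsum : ∀ i, h * (∑ k, γ k i) ≤ 1)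
    (s : ℕ → Fin n → ℝ) (x : ℕ → Fin m → Fin n → ℝ) (r : ℕ → Fin n → ℝ)
    (hs : ∀ t i, s (t + 1) i = s t i - h * (s t i * ∑ k, ∑ j, β k i j * x t k j))
    (hx : ∀ t k i, x (t + 1) k i
      = x t k i + h * (s t i * (∑ j, β k i j * x t k j) - γ k i * x t k i))
    (hinit : ∀ i, s 0 i ∈ Set.Icc (0 : ℝ) 1 ∧ (∀ k, x 0 k i ∈ Set.Icc (0 : ℝ) 1) ∧
      r 0 i ∈ Set.Icc (0 : ℝ) 1 ∧ s 0 i + (∑ k, x 0 k i) + r 0 i = 1)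
    (k : Fin m)
    (M : Matrix (Fin n) (Fin n) ℝ)
    (hM : M = 1 - h • Matrix.diagonal (γ k) + h • Matrix.of (β k))
    (P : Matrix (Fin n) (Fin n) ℝ) (hPdiag : P.IsDiag) (hP : P.PosDef) :
    ∀ t : ℕ,
      ((fun i => x (t + 1) k i) ⬝ᵥ (P *ᵥ fun i => x (t + 1) k i))
        - ((fun i => x t k i) ⬝ᵥ (P *ᵥ fun i => x t k i))
      ≤ (fun i => x t k i) ⬝ᵥ ((Mᵀ * P * M - P) *ᵥ fun i => x t k i) := by
  have hfeas : ∀ t, SIRFeasible (s t) (x t) := by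
    intro t
    induction t with
    | zero =>
      intro i
      obtain ⟨hs0, hx0, hr0, hmass⟩ := hinit i
      exact ⟨hs0.1, fun k => (hx0 k).1, by linarith [hr0.1]⟩
    | succ t ih =>
      exact ih.step hh.le hβ (fun k i => (hγ k i).le) hβsum hγsum (hs t) (hx t)
  intro t
  have hbound : x (t + 1) k ≤ M *ᵥ x t k :=
    hM ▸ (hfeas t).infected_le_mulVec hh.le hβ (hx t) k
  rw [sub_mulVec, dotProduct_sub, dotProduct_transpose_mul_mul_mulVec]
  exact sub_le_sub_right (hPdiag.dotProduct_mulVec_self_le (fun i => hP.diag_pos.le)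
    (fun i => (hfeas (t + 1) i).2.1 k) hbound) _

/-- Along trajectories of the networked multi-virus SIR model, for any diagonal
positive definite `P^k`, the decrement of the quadratic Lyapunov function
`V = (x^k)ᵀ P^k x^k` satisfies `ΔV ≤ (x^k)ᵀ((M^k)ᵀ P^k M^k - P^k)x^k`. -/
theorem multiVirusSIR_lyapunov_decrement
    (n m : ℕ) (hn : 0 < n) (hm : 0 < m) (h : ℝ) (hh : 0 < h)
    (β : Fin m → Fin n → Fin n → ℝ) (γ : Fin m → Fin n → ℝ)
    (hβ : ∀ k i j, 0 ≤ β k i j) (hγ : ∀ k i, 0 < γ k i)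
    (hβsum : ∀ i, h * (∑ k, ∑ j, β k i j) ≤ 1)
    (hγsum : ∀ i, h * (∑ k, γ k i) ≤ 1)
    (s : ℕ → Fin n → ℝ) (x : ℕ → Fin m → Fin n → ℝ) (r : ℕ → Fin n → ℝ)
    (hs : ∀ t i, s (t + 1) i = s t i - h * (s t i * ∑ k, ∑ j, β k i j * x t k j))
    (hx : ∀ t k i, x (t + 1) k i
      = x t k i + h * (s t i * (∑ j, β k i j * x t k j) - γ k i * x t k i))
    (hr : ∀ t i, r (t + 1) i = r t i + h * ∑ k, γ k i * x t k i)
    (hinit : ∀ i, s 0 i ∈ Set.Icc (0 : ℝ) 1 ∧ (∀ k, x 0 k i ∈ Set.Icc (0 : ℝ) 1) ∧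
      r 0 i ∈ Set.Icc (0 : ℝ) 1 ∧ s 0 i + (∑ k, x 0 k i) + r 0 i = 1)
    (k : Fin m)
    (M : Matrix (Fin n) (Fin n) ℝ)
    (hM : M = 1 - h • Matrix.diagonal (γ k) + h • Matrix.of (β k))
    (P : Matrix (Fin n) (Fin n) ℝ) (hPdiag : P.IsDiag) (hP : P.PosDef) :
    ∀ t : ℕ,
      ((fun i => x (t + 1) k i) ⬝ᵥ (P *ᵥ fun i => x (t + 1) k i))
        - ((fun i => x t k i) ⬝ᵥ (P *ᵥ fun i => x t k i))
      ≤ (fun i => x t k i) ⬝ᵥ ((Mᵀ * P * M - P) *ᵥ fun i => x t k i) :=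
  multiVirusSIR_lyapunov_decrement_general n m h hh β γ hβ hγ hβsum hγsum s x r hs hx hinit k M hM P
    hPdiag hP
end

section
/- Let h > 0, let γ^k_i > 0 satisfy h·∑_{k=1}^m γ^k_i ≤ 1 for all i ∈ {1,…,n}, let c^k_i ∈ (0,1] for all i ∈ {1,…,n}, k ∈ {1,…,m}, and suppose that for each i ∈ {1,…,n} the values γ^1_i, γ^2_i, …, γ^m_i are pairwise distinct. Define C^k = diag(c^k_1,…,c^k_n) and Γ^k = diag(γ^k_1,…,γ^k_n). Then the mn×mn block matrix 𝕆₀ = [𝒪₀^1 𝒪₀^2 ⋯ 𝒪₀^m], where 𝒪₀^k is the mn×n matrix obtained by stacking the blocks C^k, C^k(I−hΓ^k), C^k(I−hΓ^k)², …, C^k(I−hΓ^k)^{m−1}, is invertible. -/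
open Matrix

/-- Theorem 2 of the paper: if for each node `i` the healing rates `γᵢᵏ` are
pairwise distinct across the viruses `k`, then the observability matrix
`𝕆₀ = [𝒪₀¹ ⋯ 𝒪₀ᵐ]` at the state `s ≡ 0`, whose `((l,i),(k,j))` entry is the
`(i,j)` entry of `Cᵏ (I - hΓᵏ)ˡ`, is invertible. -/
theorem multiVirusSIR_observability_matrix_invertible
    (n m : ℕ) (hn : 0 < n) (hm : 0 < m) (h : ℝ) (hh : 0 < h)
    (γ c : Fin m → Fin n → ℝ)
    (hγ : ∀ k i, 0 < γ k i) (hγsum : ∀ i, h * (∑ k, γ k i) ≤ 1)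
    (hc : ∀ k i, c k i ∈ Set.Ioc (0 : ℝ) 1)
    (hdist : ∀ i, Function.Injective fun k => γ k i) :
    IsUnit (Matrix.of fun (li kj : Fin m × Fin n) =>
      (Matrix.diagonal (c kj.1) * (1 - h • Matrix.diagonal (γ kj.1)) ^ (li.1 : ℕ))
        li.2 kj.2) := by
  have key : (Matrix.of fun (li kj : Fin m × Fin n) =>
      (Matrix.diagonal (c kj.1) * (1 - h • Matrix.diagonal (γ kj.1)) ^ (li.1 : ℕ))
        li.2 kj.2) =
      Matrix.blockDiagonal (fun i => Matrix.of fun l k : Fin m =>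
        c k i * (1 - h * γ k i) ^ (l : ℕ)) := by
    ext ⟨l, i⟩ ⟨k, j⟩
    have hd : (1 : Matrix (Fin n) (Fin n) ℝ) - h • Matrix.diagonal (γ k) =
        Matrix.diagonal (fun i => 1 - h * γ k i) := by
      rw [← Matrix.diagonal_one, ← Matrix.diagonal_smul, ← Matrix.diagonal_sub]
      rfl
    rw [Matrix.of_apply, hd, Matrix.diagonal_pow, Matrix.diagonal_mul_diagonal,
      Matrix.blockDiagonal_apply]
    by_cases hij : i = j <;> simp [Matrix.diagonal_apply, hij]
  rw [key, Matrix.isUnit_iff_isUnit_det, Matrix.det_blockDiagonal, isUnit_iff_ne_zero]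
  refine Finset.prod_ne_zero_iff.mpr fun i _ => ?_
  have hV : (Matrix.of fun l k : Fin m => c k i * (1 - h * γ k i) ^ (l : ℕ)) =
      (Matrix.vandermonde fun k => 1 - h * γ k i)ᵀ *
        Matrix.diagonal (fun k => c k i) := by
    ext l k
    rw [Matrix.mul_apply]
    simp [Matrix.diagonal_apply, Matrix.vandermonde, mul_comm]
  rw [hV, Matrix.det_mul, Matrix.det_transpose, Matrix.det_diagonal]
  refine mul_ne_zero ?_ (Finset.prod_ne_zero_iff.mpr fun k _ => (hc k i).1.ne')
  rw [Matrix.det_vandermonde_ne_zero_iff]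
  intro a b hab
  simp only at hab
  exact hdist i (mul_left_cancel₀ hh.ne' (by linarith : h * γ a i = h * γ b i))
end

section
/- Let h > 0, let γ^k_i > 0 satisfy h·∑_{k=1}^m γ^k_i ≤ 1 for all i ∈ {1,…,n}, let c^k_i ∈ (0,1] for all i, k, and suppose that for each i ∈ {1,…,n} the values γ^1_i, …, γ^m_i are pairwise distinct. Consider the linear dynamics x^k[t+1] = (I − hΓ^k)x^k[t] (the multi-virus SIR model at s ≡ 0) with output y[t] = ∑_{k=1}^m C^k x^k[t]. If two state collections (x^1[t],…,x^m[t]) and (x̃^1[t],…,x̃^m[t]) ∈ (ℝ^n)^m produce identical outputs y[t], y[t+1], …, y[t+m−1], then x^k[t] = x̃^k[t] for every k ∈ {1,…,m}; i.e., the state is recoverable from m consecutive output measurements. -/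
open Matrix

lemma sir_pow_step (n m : ℕ) (h : ℝ) (γ : Fin m → Fin n → ℝ)
    (x : Fin m → ℕ → Fin n → ℝ)
    (hdyn : ∀ k t, x k (t + 1) = (1 - h • Matrix.diagonal (γ k)) *ᵥ x k t)
    (k : Fin m) (t : ℕ) (i : Fin n) :
    ∀ l : ℕ, x k (t + l) i = (1 - h * γ k i) ^ l * x k t i := by
  intro l
  induction l with
  | zero => simp
  | succ l ih =>
    have : x k (t + l + 1) = (1 - h • Matrix.diagonal (γ k)) *ᵥ x k (t + l) := hdyn k (t + l)
    have hmat : (1 - h • Matrix.diagonal (γ k)) = Matrix.diagonal (fun j => 1 - h * γ k j) := by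
      rw [← Matrix.diagonal_one, ← Matrix.diagonal_smul, ← Matrix.diagonal_sub]
      rfl
    have := congrFun this i
    rw [hmat, Matrix.mulVec_diagonal] at this
    have heq : t + (l + 1) = t + l + 1 := by ring
    rw [heq, this, ih]
    ring

/-- Local observability of the multi-virus SIR model at `s ≡ 0`: under the linear
dynamics `x^k[t+1] = (I - hΓ^k)x^k[t]` with output `y[t] = ∑ₖ C^k x^k[t]`, if two
state collections produce identical outputs at times `t, t+1, …, t+m-1`, then
they agree at time `t`. -/
theorem multiVirusSIR_locally_observable_at_zero
    (n m : ℕ) (hn : 0 < n) (hm : 0 < m) (h : ℝ) (hh : 0 < h)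
    (γ c : Fin m → Fin n → ℝ)
    (hγ : ∀ k i, 0 < γ k i) (hγsum : ∀ i, h * (∑ k, γ k i) ≤ 1)
    (hc : ∀ k i, c k i ∈ Set.Ioc (0 : ℝ) 1)
    (hdist : ∀ i, Function.Injective fun k => γ k i)
    (x x' : Fin m → ℕ → Fin n → ℝ)
    (hdyn : ∀ k t, x k (t + 1) = (1 - h • Matrix.diagonal (γ k)) *ᵥ x k t)
    (hdyn' : ∀ k t, x' k (t + 1) = (1 - h • Matrix.diagonal (γ k)) *ᵥ x' k t)
    (t : ℕ)
    (hout : ∀ l, l < m → ∀ i, ∑ k, c k i * x k (t + l) i = ∑ k, c k i * x' k (t + l) i) :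
    ∀ k, x k t = x' k t := by
  have key : ∀ (i : Fin n) (k : Fin m), x k t i = x' k t i := by
    intro i
    set r : Fin m → ℝ := fun k => 1 - h * γ k i with hr
    set z : Fin m → ℝ := fun k => c k i * (x k t i - x' k t i) with hzdef
    have hrinj : Function.Injective r := by
      intro a b hab
      apply hdist i
      simp only [hr] at hab
      have : h * γ a i = h * γ b i := by linarith
      exact mul_left_cancel₀ (ne_of_gt hh) this
    have hz : z ᵥ* Matrix.vandermonde r = 0 := by
      funext l
      have hout' := hout l l.isLt i
      simp only [Matrix.vecMul, dotProduct, Matrix.vandermonde]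
      have hx := fun k => sir_pow_step n m h γ x hdyn k t i l
      have hx' := fun k => sir_pow_step n m h γ x' hdyn' k t i l
      simp only [hx, hx'] at hout'
      have : ∑ k, z k * r k ^ (l : ℕ) = 0 := by
        have expand : ∀ k, z k * r k ^ (l : ℕ)
            = c k i * ((1 - h * γ k i) ^ (l : ℕ) * x k t i)
              - c k i * ((1 - h * γ k i) ^ (l : ℕ) * x' k t i) := by
          intro k; simp only [hzdef, hr]; ring
        rw [Finset.sum_congr rfl (fun k _ => expand k), Finset.sum_sub_distrib, hout']
        ring
      simpa using this
    have hdet : IsUnit (Matrix.vandermonde r).det := by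
      rw [Matrix.det_vandermonde]
      apply Ne.isUnit
      rw [Finset.prod_ne_zero_iff]
      intro a _
      rw [Finset.prod_ne_zero_iff]
      intro b hb
      rw [Finset.mem_Ioi] at hb
      exact sub_ne_zero.2 fun he => (ne_of_gt hb) (hrinj he)
    have hzero : z = 0 := by
      have := Matrix.vecMul_injective_iff_isUnit.2
        (Matrix.isUnit_iff_isUnit_det _ |>.2 hdet)
      have h0 : (0 : Fin m → ℝ) ᵥ* Matrix.vandermonde r = 0 := by simp
      exact this (hz.trans h0.symm)
    intro k
    have hzk : z k = 0 := congrFun hzero k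
    have hck := (hc k i).1
    have : x k t i - x' k t i = 0 := by
      rcases mul_eq_zero.1 hzk with hc0 | hd
      · exact absurd hc0 (ne_of_gt hck)
      · exact hd
    linarith
  intro k
  funext i
  exact key i k
end
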